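/- Every ordered factorization of b into k nonzero pairwise-disjoint-support parts in which only the last part may fail to be multiplicity free induces, by removing from the last part b_k the entries at indices where b has entry exactly 1, an ordered tuple summing to b̂; each ordered factorization of b̂ into nonzero multiplicity-free pairwise-disjoint parts arises in exactly two ways (according to whether the removed part of b_k is empty or not). -/
import Mathlib

/-- Ordered tuples `(f 0, …, f (k-1))` of nonzero exponent vectors in `ℕ^n` with
pairwise disjoint supports, summing to `b`, in which all parts except possibly the
last one are multiplicity free (all entries `≤ 1`). -/
def TupleSet (n k : ℕ) (b : Fin n → ℕ) : Set (Fin k → Fin n → ℕ) :=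
  {f | (∀ j, f j ≠ 0) ∧
       (∀ j j', j ≠ j' → ∀ i, f j i = 0 ∨ f j' i = 0) ∧
       (∑ j, f j) = b ∧
       (∀ j : Fin k, (j : ℕ) + 1 < k → ∀ i, f j i ≤ 1)}

/-- `b̂` : the multiplicity-free vector recording the indices where `b` has entry
exactly `1`. -/
def hatVec (n : ℕ) (b : Fin n → ℕ) : Fin n → ℕ := fun i => if b i = 1 then 1 else 0

/-- The complementary vector: `b` at indices where `b i ≠ 1`, zero elsewhere. -/
def sVec {n : ℕ} (b : Fin n → ℕ) : Fin n → ℕ := fun i => if b i = 1 then 0 else b i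

lemma hatVec_add_sVec {n : ℕ} (b : Fin n → ℕ) (i : Fin n) :
    hatVec n b i + sVec b i = b i := by
  simp only [hatVec, sVec]; split <;> omega

lemma part_le {n k : ℕ} {c : Fin n → ℕ} {f : Fin k → Fin n → ℕ} (hf : f ∈ TupleSet n k c)
    (j : Fin k) (i : Fin n) : f j i ≤ c i := by
  have h := congrFun hf.2.2.1 i
  simp only [Finset.sum_apply] at h
  calc f j i ≤ ∑ j', f j' i :=
        Finset.single_le_sum (f := fun j' => f j' i) (fun _ _ => Nat.zero_le _)
          (Finset.mem_univ j)
    _ = c i := h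

lemma tupleSet_finite (n k : ℕ) (c : Fin n → ℕ) : (TupleSet n k c).Finite := by
  apply Set.Finite.subset (Set.finite_Icc (0 : Fin k → Fin n → ℕ) (fun _ => c))
  intro f hf
  rw [Set.mem_Icc]
  exact ⟨fun j i => Nat.zero_le _, fun j i => part_le hf j i⟩

lemma sVec_ne_zero {n : ℕ} {b : Fin n → ℕ} (hNMF : ∃ i, 2 ≤ b i) : sVec b ≠ 0 := by
  obtain ⟨i, hi⟩ := hNMF
  intro h
  have := congrFun h i
  simp only [sVec, Pi.zero_apply] at this
  split at this <;> omega

lemma hatVec_le_one {n : ℕ} (b : Fin n → ℕ) (i : Fin n) : hatVec n b i ≤ 1 := by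
  simp only [hatVec]; split <;> omega

lemma castSucc_le_hat {n k : ℕ} {b : Fin n → ℕ} {f : Fin (k+1) → Fin n → ℕ}
    (hf : f ∈ TupleSet n (k+1) b) (j : Fin k) (i : Fin n) :
    f (Fin.castSucc j) i ≤ hatVec n b i := by
  have hle1 : f (Fin.castSucc j) i ≤ 1 := by
    apply hf.2.2.2 (Fin.castSucc j) _ i
    have := j.isLt
    simp only [Fin.coe_castSucc]
    omega
  simp only [hatVec]
  split
  · exact hle1
  · rename_i hbi
    by_contra hpos
    have hsum := congrFun hf.2.2.1 i
    simp only [Finset.sum_apply] at hsum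
    have heq : ∑ j', f j' i = f (Fin.castSucc j) i := by
      apply Finset.sum_eq_single
      · intro j' _ hne
        rcases hf.2.1 j' (Fin.castSucc j) hne i with h | h
        · exact h
        · omega
      · simp
    omega

lemma last_eq {n k : ℕ} {b : Fin n → ℕ} {f : Fin (k+1) → Fin n → ℕ}
    (hf : f ∈ TupleSet n (k+1) b) (i : Fin n) (hbi : b i ≠ 1) :
    f (Fin.last k) i = b i := by
  have hsum := congrFun hf.2.2.1 i
  simp only [Finset.sum_apply] at hsum
  rw [Fin.sum_univ_castSucc] at hsum
  have hz : ∀ j : Fin k, f (Fin.castSucc j) i = 0 := by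
    intro j
    have h := castSucc_le_hat hf j i
    simp only [hatVec, if_neg hbi] at h
    omega
  rw [Finset.sum_eq_zero (fun j _ => hz j)] at hsum
  omega

lemma last_decomp {n k : ℕ} {b : Fin n → ℕ} {f : Fin (k+1) → Fin n → ℕ}
    (hf : f ∈ TupleSet n (k+1) b) (i : Fin n) :
    f (Fin.last k) i = (if b i = 1 then f (Fin.last k) i else 0) + sVec b i := by
  by_cases hbi : b i = 1
  · simp [hbi, sVec]
  · simp only [if_neg hbi, sVec, Nat.zero_add]
    exact last_eq hf i hbi

lemma sVec_eq_zero_of_hat {n : ℕ} {b : Fin n → ℕ} {i : Fin n} (h : hatVec n b i ≠ 0) :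
    sVec b i = 0 := by
  simp only [hatVec] at h
  simp only [sVec]
  split
  · rfl
  · rename_i hbi; rw [if_neg hbi] at h; omega

lemma memA {n k : ℕ} {b : Fin n → ℕ} {g : Fin k → Fin n → ℕ}
    (hg : g ∈ TupleSet n k (hatVec n b)) (hNMF : ∃ i, 2 ≤ b i) :
    Fin.snoc g (sVec b) ∈ TupleSet n (k+1) b := by
  refine ⟨?_, ?_, ?_, ?_⟩
  · intro j
    refine Fin.lastCases ?_ ?_ j
    · rw [Fin.snoc_last]; exact sVec_ne_zero hNMF
    · intro j'; rw [Fin.snoc_castSucc]; exact hg.1 j'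
  · intro j j' hne i
    rcases Fin.eq_castSucc_or_eq_last j with ⟨j₁, rfl⟩ | rfl <;>
      rcases Fin.eq_castSucc_or_eq_last j' with ⟨j₂, rfl⟩ | rfl
    · simp only [Fin.snoc_castSucc]
      exact hg.2.1 j₁ j₂ (fun h => hne (congrArg Fin.castSucc h)) i
    · simp only [Fin.snoc_castSucc, Fin.snoc_last]
      by_cases h : g j₁ i = 0
      · left; exact h
      · right
        apply sVec_eq_zero_of_hat
        have := part_le hg j₁ i
        omega
    · simp only [Fin.snoc_castSucc, Fin.snoc_last]
      by_cases h : g j₂ i = 0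
      · right; exact h
      · left
        apply sVec_eq_zero_of_hat
        have := part_le hg j₂ i
        omega
    · exact absurd rfl hne
  · funext i
    simp only [Finset.sum_apply]
    rw [Fin.sum_univ_castSucc]
    simp only [Fin.snoc_castSucc, Fin.snoc_last]
    have h := congrFun hg.2.2.1 i
    simp only [Finset.sum_apply] at h
    rw [h]
    exact hatVec_add_sVec b i
  · intro j hj i
    have hjk : (j : ℕ) < k := by omega
    have hje : j = Fin.castSucc ⟨j.1, hjk⟩ := by ext; simp
    rw [hje, Fin.snoc_castSucc]
    have := part_le hg ⟨j.1, hjk⟩ i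
    have := hatVec_le_one b i
    omega

lemma memB {n k : ℕ} {b : Fin n → ℕ} {g : Fin (k+1) → Fin n → ℕ}
    (hg : g ∈ TupleSet n (k+1) (hatVec n b)) (hNMF : ∃ i, 2 ≤ b i) :
    Fin.snoc (g ∘ Fin.castSucc) (g (Fin.last k) + sVec b) ∈ TupleSet n (k+1) b := by
  refine ⟨?_, ?_, ?_, ?_⟩
  · intro j
    refine Fin.lastCases ?_ ?_ j
    · rw [Fin.snoc_last]
      intro h
      apply sVec_ne_zero hNMF
      funext i
      have := congrFun h i
      simp only [Pi.add_apply, Pi.zero_apply] at this ⊢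
      omega
    · intro j'; rw [Fin.snoc_castSucc]; exact hg.1 (Fin.castSucc j')
  · intro j j' hne i
    rcases Fin.eq_castSucc_or_eq_last j with ⟨j₁, rfl⟩ | rfl <;>
      rcases Fin.eq_castSucc_or_eq_last j' with ⟨j₂, rfl⟩ | rfl
    · simp only [Fin.snoc_castSucc, Function.comp_apply]
      exact hg.2.1 _ _ (fun h => hne (congrArg Fin.castSucc (Fin.castSucc_injective _ h))) i
    · simp only [Fin.snoc_castSucc, Fin.snoc_last, Function.comp_apply, Pi.add_apply]
      by_cases h : g (Fin.castSucc j₁) i = 0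
      · left; exact h
      · right
        have hs : sVec b i = 0 := by
          apply sVec_eq_zero_of_hat
          have := part_le hg (Fin.castSucc j₁) i
          omega
        have hl : g (Fin.last k) i = 0 := by
          rcases hg.2.1 (Fin.castSucc j₁) (Fin.last k)
            (Fin.ne_last_of_lt (Fin.castSucc_lt_last j₁)) i with h' | h'
          · omega
          · exact h'
        omega
    · simp only [Fin.snoc_castSucc, Fin.snoc_last, Function.comp_apply, Pi.add_apply]
      by_cases h : g (Fin.castSucc j₂) i = 0
      · right; exact h
      · left
        have hs : sVec b i = 0 := by
          apply sVec_eq_zero_of_hat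
          have := part_le hg (Fin.castSucc j₂) i
          omega
        have hl : g (Fin.last k) i = 0 := by
          rcases hg.2.1 (Fin.castSucc j₂) (Fin.last k)
            (Fin.ne_last_of_lt (Fin.castSucc_lt_last j₂)) i with h' | h'
          · omega
          · exact h'
        omega
    · exact absurd rfl hne
  · funext i
    simp only [Finset.sum_apply]
    rw [Fin.sum_univ_castSucc]
    simp only [Fin.snoc_castSucc, Fin.snoc_last, Function.comp_apply, Pi.add_apply]
    have h := congrFun hg.2.2.1 i
    simp only [Finset.sum_apply] at h
    rw [Fin.sum_univ_castSucc] at h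
    have := hatVec_add_sVec b i
    omega
  · intro j hj i
    have hjk : (j : ℕ) < k := by omega
    have hje : j = Fin.castSucc ⟨j.1, hjk⟩ := by ext; simp
    rw [hje, Fin.snoc_castSucc]
    simp only [Function.comp_apply]
    have h1 := part_le hg (Fin.castSucc ⟨j.1, hjk⟩) i
    have h2 := hatVec_le_one b i
    omega

lemma memC {n k : ℕ} {b : Fin n → ℕ} {f : Fin (k+1) → Fin n → ℕ}
    (hf : f ∈ TupleSet n (k+1) b)
    (hr : ∀ i, b i = 1 → f (Fin.last k) i = 0) :
    (f ∘ Fin.castSucc) ∈ TupleSet n k (hatVec n b) := by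
  refine ⟨fun j => hf.1 _, ?_, ?_, ?_⟩
  · intro j j' hne i
    exact hf.2.1 _ _ (fun h => hne (Fin.castSucc_injective _ h)) i
  · funext i
    simp only [Finset.sum_apply, Function.comp_apply]
    have h := congrFun hf.2.2.1 i
    simp only [Finset.sum_apply] at h
    rw [Fin.sum_univ_castSucc] at h
    by_cases hbi : b i = 1
    · rw [hr i hbi] at h
      simp only [hatVec, if_pos hbi]
      omega
    · rw [Finset.sum_eq_zero]
      · simp [hatVec, hbi]
      · intro j _
        have := castSucc_le_hat hf j i
        simp only [hatVec, if_neg hbi] at this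
        omega
  · intro j hj i
    simp only [Function.comp_apply]
    have h1 := castSucc_le_hat hf j i
    have h2 := hatVec_le_one b i
    omega

lemma memD {n k : ℕ} {b : Fin n → ℕ} {f : Fin (k+1) → Fin n → ℕ}
    (hf : f ∈ TupleSet n (k+1) b)
    (hr : (fun i => if b i = 1 then f (Fin.last k) i else 0) ≠ 0) :
    Fin.snoc (f ∘ Fin.castSucc) (fun i => if b i = 1 then f (Fin.last k) i else 0)
      ∈ TupleSet n (k+1) (hatVec n b) := by
  refine ⟨?_, ?_, ?_, ?_⟩
  · intro j
    refine Fin.lastCases ?_ ?_ j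
    · rw [Fin.snoc_last]; exact hr
    · intro j'; rw [Fin.snoc_castSucc]; exact hf.1 _
  · intro j j' hne i
    rcases Fin.eq_castSucc_or_eq_last j with ⟨j₁, rfl⟩ | rfl <;>
      rcases Fin.eq_castSucc_or_eq_last j' with ⟨j₂, rfl⟩ | rfl
    · simp only [Fin.snoc_castSucc, Function.comp_apply]
      exact hf.2.1 _ _ (fun h => hne (congrArg Fin.castSucc (Fin.castSucc_injective _ h))) i
    · simp only [Fin.snoc_castSucc, Fin.snoc_last, Function.comp_apply]
      by_cases h : f (Fin.castSucc j₁) i = 0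
      · left; exact h
      · right
        have hl : f (Fin.last k) i = 0 := by
          rcases hf.2.1 (Fin.castSucc j₁) (Fin.last k)
            (Fin.ne_last_of_lt (Fin.castSucc_lt_last j₁)) i with h' | h'
          · omega
          · exact h'
        split <;> omega
    · simp only [Fin.snoc_castSucc, Fin.snoc_last, Function.comp_apply]
      by_cases h : f (Fin.castSucc j₂) i = 0
      · right; exact h
      · left
        have hl : f (Fin.last k) i = 0 := by
          rcases hf.2.1 (Fin.castSucc j₂) (Fin.last k)
            (Fin.ne_last_of_lt (Fin.castSucc_lt_last j₂)) i with h' | h'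
          · omega
          · exact h'
        split <;> omega
    · exact absurd rfl hne
  · funext i
    simp only [Finset.sum_apply]
    rw [Fin.sum_univ_castSucc]
    simp only [Fin.snoc_castSucc, Fin.snoc_last, Function.comp_apply]
    have h := congrFun hf.2.2.1 i
    simp only [Finset.sum_apply] at h
    rw [Fin.sum_univ_castSucc] at h
    by_cases hbi : b i = 1
    · simp only [if_pos hbi, hatVec]
      omega
    · have hz : ∀ j : Fin k, f (Fin.castSucc j) i = 0 := by
        intro j
        have := castSucc_le_hat hf j i
        simp only [hatVec, if_neg hbi] at this
        omega
      rw [Finset.sum_eq_zero (fun j _ => hz j)]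
      simp [hatVec, hbi]
  · intro j hj i
    have hjk : (j : ℕ) < k := by omega
    have hje : j = Fin.castSucc ⟨j.1, hjk⟩ := by ext; simp
    rw [hje, Fin.snoc_castSucc]
    simp only [Function.comp_apply]
    have h1 := castSucc_le_hat hf ⟨j.1, hjk⟩ i
    have h2 := hatVec_le_one b i
    omega

lemma card_step {n : ℕ} {b : Fin n → ℕ} (hNMF : ∃ i, 2 ≤ b i) (k : ℕ) :
    Nat.card (TupleSet n (k+1) b) =
      Nat.card (TupleSet n k (hatVec n b)) + Nat.card (TupleSet n (k+1) (hatVec n b)) := by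
  haveI := (tupleSet_finite n k (hatVec n b)).to_subtype
  haveI := (tupleSet_finite n (k+1) (hatVec n b)).to_subtype
  have e : (↥(TupleSet n k (hatVec n b)) ⊕ ↥(TupleSet n (k+1) (hatVec n b))) ≃
      ↥(TupleSet n (k+1) b) := by
    refine Equiv.ofBijective (fun x => Sum.elim
        (fun p => (⟨Fin.snoc p.1 (sVec b), memA p.2 hNMF⟩ : TupleSet n (k+1) b))
        (fun p => ⟨Fin.snoc (p.1 ∘ Fin.castSucc) (p.1 (Fin.last k) + sVec b),
          memB p.2 hNMF⟩) x) ⟨?_, ?_⟩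
    · rintro (⟨g, hg⟩ | ⟨g, hg⟩) (⟨g', hg'⟩ | ⟨g', hg'⟩) h <;>
        simp only [Sum.elim_inl, Sum.elim_inr, Subtype.mk.injEq] at h
      · have : g = g' := by
          funext j
          have := congrFun h (Fin.castSucc j)
          simpa using this
        simp [this]
      · exfalso
        have h2 := congrFun h (Fin.last k)
        simp only [Fin.snoc_last] at h2
        apply hg'.1 (Fin.last k)
        funext i
        have := congrFun h2 i
        simp only [Pi.add_apply, Pi.zero_apply] at this ⊢
        omega
      · exfalso
        have h2 := congrFun h (Fin.last k)
        simp only [Fin.snoc_last] at h2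
        apply hg.1 (Fin.last k)
        funext i
        have := congrFun h2 i
        simp only [Pi.add_apply, Pi.zero_apply] at this ⊢
        omega
      · have : g = g' := by
          funext j
          refine Fin.lastCases ?_ ?_ j
          · have h2 := congrFun h (Fin.last k)
            simp only [Fin.snoc_last] at h2
            funext i
            have := congrFun h2 i
            simp only [Pi.add_apply] at this
            omega
          · intro j'
            have := congrFun h (Fin.castSucc j')
            simpa using this
        simp [this]
    · rintro ⟨f, hf⟩
      by_cases hr : (fun i => if b i = 1 then f (Fin.last k) i else 0) = 0
      · refine ⟨Sum.inl ⟨f ∘ Fin.castSucc, memC hf ?_⟩, ?_⟩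
        · intro i hbi
          have := congrFun hr i
          simpa [hbi] using this
        · simp only [Sum.elim_inl, Subtype.mk.injEq]
          funext j
          refine Fin.lastCases ?_ ?_ j
          · rw [Fin.snoc_last]
            funext i
            have hd := last_decomp hf i
            have hri := congrFun hr i
            simp only [Pi.zero_apply] at hri
            omega
          · intro j'
            rw [Fin.snoc_castSucc]
            rfl
      · refine ⟨Sum.inr ⟨Fin.snoc (f ∘ Fin.castSucc)
            (fun i => if b i = 1 then f (Fin.last k) i else 0), memD hf hr⟩, ?_⟩
        simp only [Sum.elim_inr, Subtype.mk.injEq]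
        funext j
        refine Fin.lastCases ?_ ?_ j
        · rw [Fin.snoc_last]
          funext i
          simp only [Fin.snoc_last, Pi.add_apply]
          have hd := last_decomp hf i
          omega
        · intro j'
          rw [Fin.snoc_castSucc]
          simp only [Function.comp_apply, Fin.snoc_castSucc]
  rw [← Nat.card_congr e, Nat.card_sum]

lemma tupleSet_zero (n : ℕ) (c : Fin n → ℕ) (hc : c ≠ 0) : TupleSet n 0 c = ∅ := by
  ext f
  simp only [Set.mem_empty_iff_false, iff_false]
  rintro ⟨h1, h2, h3, h4⟩
  apply hc
  rw [← h3]
  simp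

lemma tupleSet_top {n : ℕ} {b : Fin n → ℕ} (hNMF : ∃ i, 2 ≤ b i) :
    TupleSet n n (hatVec n b) = ∅ := by
  obtain ⟨i0, hi0⟩ := hNMF
  ext f
  simp only [Set.mem_empty_iff_false, iff_false]
  intro hf
  have hb := fun (j : Fin n) (i : Fin n) => part_le hf j i
  have hex : ∀ j : Fin n, ∃ i, f j i ≠ 0 := by
    intro j
    by_contra h
    push_neg at h
    exact hf.1 j (funext fun i => by simpa using h i)
  choose φ hφ using hex
  have hinj : Function.Injective φ := by
    intro j j' h
    by_contra hne
    rcases hf.2.1 j j' hne (φ j) with hz | hz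
    · exact hφ j hz
    · rw [h] at hz
      exact hφ j' hz
  have hne0 : ∀ j, φ j ≠ i0 := by
    intro j h
    have h1 := hb j (φ j)
    have h2 : hatVec n b i0 = 0 := by
      simp only [hatVec]
      rw [if_neg (by omega)]
    rw [h, h2] at h1
    rw [← h] at h1
    exact hφ j (Nat.le_zero.mp h1)
  have hcle : Fintype.card (Fin n) ≤ Fintype.card {i : Fin n // i ≠ i0} :=
    Fintype.card_le_of_injective (fun j => ⟨φ j, hne0 j⟩)
      (fun j j' h => hinj (congrArg Subtype.val h))
  have hlt : Fintype.card {i : Fin n // i ≠ i0} < Fintype.card (Fin n) :=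
    Fintype.card_subtype_lt (x := i0) (by simp)
  omega

/-- For `b` not multiplicity free with `b̂ ≠ 0`: removing from the last part the entries
at the indices where `b` has entry `≥ 2` sends ordered factorizations of `b` (nonzero
parts, pairwise disjoint supports, only the last possibly not multiplicity free) to
ordered factorizations of `b̂`, and each factorization of `b̂` arises in exactly two
ways; so the total number of factorizations of `b` is twice that of `b̂`. -/
theorem factorizations_double (n : ℕ) (b : Fin n → ℕ)
    (hNMF : ∃ i, 2 ≤ b i) (hhat : ∃ i, b i = 1) :
    ∑ k ∈ Finset.range (n + 1), Nat.card (TupleSet n k b) =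
      2 * ∑ k ∈ Finset.range (n + 1), Nat.card (TupleSet n k (hatVec n b)) := by
  have hb : b ≠ 0 := by
    obtain ⟨i, hi⟩ := hNMF
    intro h
    have := congrFun h i
    simp only [Pi.zero_apply] at this
    omega
  have hhat0 : hatVec n b ≠ 0 := by
    obtain ⟨i, hi⟩ := hhat
    intro h
    have := congrFun h i
    simp [hatVec, hi] at this
  have h0b : Nat.card (TupleSet n 0 b) = 0 := by
    rw [tupleSet_zero n b hb]; simp
  have h0h : Nat.card (TupleSet n 0 (hatVec n b)) = 0 := by
    rw [tupleSet_zero n _ hhat0]; simp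
  have hnh : Nat.card (TupleSet n n (hatVec n b)) = 0 := by
    rw [tupleSet_top hNMF]; simp
  have key : (∑ k ∈ Finset.range n, Nat.card (TupleSet n (k+1) (hatVec n b)))
      = ∑ k ∈ Finset.range n, Nat.card (TupleSet n k (hatVec n b)) := by
    have h1 : (∑ k ∈ Finset.range (n+1), Nat.card (TupleSet n k (hatVec n b)))
        = ∑ k ∈ Finset.range n, Nat.card (TupleSet n (k+1) (hatVec n b)) := by
      simpa [h0h] using
        Finset.sum_range_succ' (fun k => Nat.card (TupleSet n k (hatVec n b))) n
    have h2 : (∑ k ∈ Finset.range (n+1), Nat.card (TupleSet n k (hatVec n b)))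
        = ∑ k ∈ Finset.range n, Nat.card (TupleSet n k (hatVec n b)) := by
      simpa [hnh] using
        Finset.sum_range_succ (fun k => Nat.card (TupleSet n k (hatVec n b))) n
    exact h1.symm.trans h2
  rw [Finset.sum_range_succ' (fun k => Nat.card (TupleSet n k b)) n]
  simp only [card_step hNMF, h0b, add_zero]
  rw [Finset.sum_add_distrib, key]
  rw [Finset.sum_range_succ (fun k => Nat.card (TupleSet n k (hatVec n b))) n, hnh, add_zero]
  omega
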